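/- (Convergence of the moment series.) Let n ≥ 1 be an integer, let α > 0, β ≥ 0, γ, δ be real numbers with n > γ + δ − 2α + 1, let k ≥ 0 be an integer, and let r ∈ (−1,1). Then the series Σ_{m=0}^∞ [ ((n−γ−1)/2)_m ((n−δ−1)/2)_m / ((1/2)_m m!) ] a_{k,m} r^{2m} converges, where a_{k,m} = B( (k+2m+1)/2, α + (n−γ−δ−1)/2 ) · ₂F₁( −β/2, (k+2m+1)/2; (k+2m+2α+n−γ−δ)/2; −1 ). -/

import Mathlib

open MeasureTheory Real Set Filter

/-- Pochhammer symbol (rising factorial) `(x)_m`. -/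
noncomputable def poch (x : ℝ) (m : ℕ) : ℝ := (ascPochhammer ℝ m).eval x

/-- Confluent hypergeometric function `₁F₁(a; c; z)`. -/
noncomputable def oneF1 (a c z : ℝ) : ℝ :=
  ∑' m : ℕ, poch a m / (poch c m * (m.factorial : ℝ)) * z ^ m

/-- Gauss hypergeometric function `₂F₁(a, b; c; z)`. -/
noncomputable def twoF1 (a b c z : ℝ) : ℝ :=
  ∑' m : ℕ, poch a m * poch b m / (poch c m * (m.factorial : ℝ)) * z ^ m

/-- Generalized hypergeometric function `₃F₂(a₁, a₂, a₃; b₁, b₂; z)`. -/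
noncomputable def threeF2 (a₁ a₂ a₃ b₁ b₂ z : ℝ) : ℝ :=
  ∑' m : ℕ, poch a₁ m * poch a₂ m * poch a₃ m /
      (poch b₁ m * poch b₂ m * (m.factorial : ℝ)) * z ^ m

/-- Beta function `B(u,v) = Γ(u)Γ(v)/Γ(u+v)`. -/
noncomputable def betaFn (u v : ℝ) : ℝ := Real.Gamma u * Real.Gamma v / Real.Gamma (u + v)

/-- `W_{γ,δ}(n)`, the ratio of Gamma functions from the paper. -/
noncomputable def Wgd (γ δ : ℝ) (n : ℕ) : ℝ :=
  (Real.Gamma (((n : ℝ) - γ) / 2) * Real.Gamma (((n : ℝ) - δ) / 2)) /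
    (Real.Gamma (((n : ℝ) - γ - 1) / 2) * Real.Gamma (((n : ℝ) - δ - 1) / 2))

lemma poch_zero (x : ℝ) : poch x 0 = 1 := by simp [poch]

lemma poch_succ (x : ℝ) (m : ℕ) : poch x (m + 1) = poch x m * (x + m) :=
  ascPochhammer_succ_eval m x

lemma poch_pos {x : ℝ} (m : ℕ) (hx : 0 < x) : 0 < poch x m :=
  ascPochhammer_pos m x hx

lemma poch_nonneg {x : ℝ} (m : ℕ) (hx : 0 ≤ x) : 0 ≤ poch x m := by
  induction m with
  | zero => simp [poch_zero]
  | succ m ih => rw [poch_succ]; positivity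

lemma poch_le_poch {x y : ℝ} (m : ℕ) (hx : 0 ≤ x) (hxy : x ≤ y) :
    poch x m ≤ poch y m := by
  induction m with
  | zero => simp [poch_zero]
  | succ m ih =>
    rw [poch_succ, poch_succ]
    have h1 : (0:ℝ) ≤ x + m := by positivity
    exact mul_le_mul ih (by linarith) h1 ((poch_nonneg m (by linarith)).trans ih |>.trans (le_of_eq rfl) |> fun h => h) |>.trans (le_of_eq rfl)

lemma abs_poch_neg_le {x : ℝ} (m : ℕ) (hx : 0 ≤ x) :
    |poch (-x) m| ≤ poch x m := by
  induction m with
  | zero => simp [poch_zero]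
  | succ m ih =>
    rw [poch_succ, poch_succ, abs_mul]
    have h1 : |(-x) + m| ≤ x + m := by
      rw [abs_le]; constructor <;> [linarith [Nat.cast_nonneg (α := ℝ) m]; linarith]
    exact mul_le_mul ih h1 (abs_nonneg _) (poch_nonneg m hx)

lemma poch_eq_zero_propagate {x : ℝ} {m : ℕ} (h : poch x m = 0) (j : ℕ) :
    poch x (j + m) = 0 := by
  induction j with
  | zero => simpa using h
  | succ j ih => rw [show j + 1 + m = (j + m) + 1 by ring, poch_succ, ih, zero_mul]

lemma alt_sum_range_bounds (g : ℕ → ℝ) (hg0 : ∀ j, 0 ≤ g j) (hmono : ∀ j, g (j + 1) ≤ g j) :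
    ∀ N, 0 ≤ (∑ j ∈ Finset.range N, (-1 : ℝ) ^ j * g j) ∧
      (∑ j ∈ Finset.range N, (-1 : ℝ) ^ j * g j) ≤ g 0 := by
  set S : ℕ → ℝ := fun N => ∑ j ∈ Finset.range N, (-1 : ℝ) ^ j * g j with hS
  have hstep : ∀ N, S (N + 1) = S N + (-1 : ℝ) ^ N * g N := by
    intro N; simp [hS, Finset.sum_range_succ]
  have heven : ∀ n : ℕ, (-1 : ℝ) ^ (2 * n) = 1 := by
    intro n; rw [pow_mul]; norm_num
  have hodd : ∀ n : ℕ, (-1 : ℝ) ^ (2 * n + 1) = -1 := by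
    intro n; rw [pow_succ, heven]; norm_num
  have key : ∀ n : ℕ, 0 ≤ S (2 * n) ∧ S (2 * n) ≤ S (2 * n + 1) ∧ S (2 * n + 1) ≤ g 0 := by
    intro n
    induction n with
    | zero =>
      have hS0 : S 0 = 0 := by simp [hS]
      have hS1 : S 1 = g 0 := by rw [hstep, hS0]; simp
      exact ⟨by simp [hS0], by rw [hS0, hS1]; exact hg0 0, le_of_eq hS1⟩
    | succ n ih =>
      obtain ⟨h1, h2, h3⟩ := ih
      have e1 : S (2 * (n + 1)) = S (2 * n + 1) + (-1 : ℝ) ^ (2 * n + 1) * g (2 * n + 1) := by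
        rw [show 2 * (n + 1) = (2 * n + 1) + 1 by ring, hstep]
      have e2 : S (2 * (n + 1) + 1) = S (2 * (n + 1)) + (-1 : ℝ) ^ (2 * (n + 1)) * g (2 * (n + 1)) :=
        hstep _
      have e3 : S (2 * n + 1) = S (2 * n) + (-1 : ℝ) ^ (2 * n) * g (2 * n) := hstep _
      rw [hodd] at e1
      rw [heven] at e2 e3
      refine ⟨?_, ?_, ?_⟩
      · -- 0 ≤ S (2(n+1)) = S(2n) + g(2n) - g(2n+1)
        have := hmono (2 * n)
        rw [e1, e3]; linarith
      · rw [e2]; have := hg0 (2 * (n + 1)); linarith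
      · rw [e2, e1]
        have := hmono (2 * (n + 1) - 1)
        have h4 : g (2 * (n + 1)) ≤ g (2 * n + 1) := by
          simpa [show 2 * n + 1 + 1 = 2 * (n + 1) by ring] using hmono (2 * n + 1)
        linarith
  intro N
  rcases Nat.even_or_odd N with ⟨n, rfl⟩ | ⟨n, rfl⟩
  · obtain ⟨h1, h2, h3⟩ := key n
    rw [show n + n = 2 * n by ring]
    exact ⟨h1, le_trans h2 h3⟩
  · obtain ⟨h1, h2, h3⟩ := key n
    exact ⟨le_trans h1 h2, h3⟩

lemma alt_tsum_bound (g : ℕ → ℝ) (hg0 : ∀ j, 0 ≤ g j) (hmono : ∀ j, g (j + 1) ≤ g j)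
    (hsum : Summable fun j => (-1 : ℝ) ^ j * g j) :
    |∑' j, (-1 : ℝ) ^ j * g j| ≤ g 0 := by
  have h := hsum.hasSum.tendsto_sum_nat
  rw [abs_le]
  constructor
  · have h1 : (0:ℝ) ≤ ∑' j, (-1 : ℝ) ^ j * g j :=
      ge_of_tendsto h (Eventually.of_forall fun N => (alt_sum_range_bounds g hg0 hmono N).1)
    linarith [hg0 0]
  · exact le_of_tendsto h (Eventually.of_forall fun N => (alt_sum_range_bounds g hg0 hmono N).2)

set_option maxHeartbeats 1000000 in
lemma twoF1_neg_one_bound (β b v : ℝ) (hβ : 0 ≤ β) (hb : 0 < b) (hv : 0 < v) :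
    |twoF1 (-β / 2) b (b + v) (-1)| ≤
      2 * ∑ j ∈ Finset.range (⌈β / 2⌉₊ + 1), poch (β / 2) j / (j.factorial : ℝ) := by
  set J : ℕ := ⌈β / 2⌉₊ with hJ
  have hβJ : β / 2 ≤ (J : ℝ) := Nat.le_ceil _
  have hβ2 : (0:ℝ) ≤ β / 2 := by linarith
  set c : ℝ := b + v with hc
  have hbc : b ≤ c := by rw [hc]; linarith
  have hc0 : (0:ℝ) < c := by rw [hc]; linarith
  set u : ℕ → ℝ := fun j => poch (-β / 2) j * poch b j / (poch c j * (j.factorial : ℝ)) * (-1 : ℝ) ^ j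
    with hu
  have htwo : twoF1 (-β / 2) b c (-1) = ∑' j, u j := rfl
  clear_value u c J
  have habs' : ∀ j, |poch (-β / 2) j| ≤ poch (β / 2) j := fun j => by
    rw [show -β / 2 = -(β / 2) by ring]; exact abs_poch_neg_le j hβ2
  -- termwise bound
  have habs : ∀ j, |u j| ≤ poch (β / 2) j / (j.factorial : ℝ) := by
    intro j
    have hfac : (0:ℝ) < (j.factorial : ℝ) := by positivity
    have hcj : (0:ℝ) < poch c j := poch_pos j hc0
    have hbj : (0:ℝ) ≤ poch b j := le_of_lt (poch_pos j hb)
    have h1 : |u j| = |poch (-β / 2) j| * poch b j / (poch c j * (j.factorial : ℝ)) := by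
      rw [hu]
      rw [abs_mul, abs_pow, abs_neg, abs_one, one_pow, mul_one, abs_div, abs_mul,
        abs_of_nonneg hbj, abs_of_pos (show (0:ℝ) < poch c j * (j.factorial : ℝ) by positivity)]
    rw [h1]
    have h2 : |poch (-β / 2) j| * poch b j ≤ poch (β / 2) j * poch c j :=
      mul_le_mul (habs' j) (poch_le_poch j (le_of_lt hb) hbc) hbj (poch_nonneg j hβ2)
    calc |poch (-β / 2) j| * poch b j / (poch c j * (j.factorial : ℝ))
        ≤ poch (β / 2) j * poch c j / (poch c j * (j.factorial : ℝ)) :=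
          (div_le_div_iff_of_pos_right (by positivity)).2 h2
      _ = poch (β / 2) j / (j.factorial : ℝ) := by
          field_simp
  have hterm_nonneg : ∀ j, (0:ℝ) ≤ poch (β / 2) j / (j.factorial : ℝ) := fun j => by
    have := poch_nonneg (x := β / 2) j hβ2; positivity
  set C : ℝ := ∑ j ∈ Finset.range (J + 1), poch (β / 2) j / (j.factorial : ℝ) with hC
  have hCge : ∀ i ∈ Finset.range (J + 1), poch (β / 2) i / (i.factorial : ℝ) ≤ C :=
    fun i hi => Finset.single_le_sum (fun j _ => hterm_nonneg j) hi
  have hCnn : 0 ≤ C := Finset.sum_nonneg fun j _ => hterm_nonneg j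
  clear_value C
  have hhead : |∑ j ∈ Finset.range J, u j| ≤ C := by
    calc |∑ j ∈ Finset.range J, u j| ≤ ∑ j ∈ Finset.range J, |u j| :=
          Finset.abs_sum_le_sum_abs _ _
      _ ≤ ∑ j ∈ Finset.range J, poch (β / 2) j / (j.factorial : ℝ) :=
          Finset.sum_le_sum fun j _ => habs j
      _ ≤ C := by
          rw [hC]
          exact Finset.sum_le_sum_of_subset_of_nonneg
            (Finset.range_subset_range.2 (Nat.le_succ J)) fun j _ _ => hterm_nonneg j
  by_cases hsum : Summable u
  · rw [htwo, ← hsum.sum_add_tsum_nat_add J]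
    have htail : |∑' j, u (j + J)| ≤ poch (β / 2) J / (J.factorial : ℝ) := by
      by_cases hK0 : poch (-β / 2) J = 0
      · have hz : ∀ j, u (j + J) = 0 := by
          intro j
          rw [hu]
          simp only
          rw [poch_eq_zero_propagate hK0 j]
          ring
        rw [tsum_congr hz, tsum_zero]
        simpa using hterm_nonneg J
      · set K : ℝ := poch (-β / 2) J * (-1 : ℝ) ^ J with hKdef
        have hKne : K ≠ 0 := mul_ne_zero hK0 (by positivity)
        set h : ℕ → ℝ := fun j =>
          (poch (-β / 2) (j + J) / poch (-β / 2) J) *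
            (poch b (j + J) / (poch c (j + J) * ((j + J).factorial : ℝ))) with hh
        clear_value K h
        have hrepr : ∀ j, u (j + J) = K * ((-1 : ℝ) ^ j * h j) := by
          intro j
          rw [hu, hh, hKdef]
          simp only
          have hcj : poch c (j + J) ≠ 0 := ne_of_gt (poch_pos _ hc0)
          have hfj : ((j + J).factorial : ℝ) ≠ 0 := by positivity
          rw [pow_add]
          field_simp
          rw [mul_div_cancel_right₀ _ (show poch (-(β / 2)) J ≠ 0 by rw [show -(β / 2) = -β / 2 by ring]; exact hK0)]
        have hQsucc : ∀ j, poch (-β / 2) (j + 1 + J) =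
            poch (-β / 2) (j + J) * (-β / 2 + ((j + J : ℕ) : ℝ)) := by
          intro j
          rw [show j + 1 + J = (j + J) + 1 by ring, poch_succ]
        have hfactor_nonneg : ∀ j : ℕ, (0:ℝ) ≤ -β / 2 + ((j + J : ℕ) : ℝ) := by
          intro j
          have : (J:ℝ) ≤ ((j + J : ℕ) : ℝ) := by
            push_cast; linarith [Nat.cast_nonneg (α := ℝ) j]
          linarith
        have hQnonneg : ∀ j, 0 ≤ poch (-β / 2) (j + J) / poch (-β / 2) J := by
          intro j
          induction j with
          | zero => simp [div_self hK0]
          | succ j ih =>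
            rw [hQsucc j, mul_div_right_comm]
            exact mul_nonneg ih (hfactor_nonneg j)
        have hh0 : ∀ j, 0 ≤ h j := by
          intro j
          rw [hh]
          have := poch_pos (x := c) (j + J) hc0
          exact mul_nonneg (hQnonneg j)
            (le_of_lt (div_pos (poch_pos _ hb) (by positivity)))
        have hhmono : ∀ j, h (j + 1) ≤ h j := by
          intro j
          set t : ℝ := ((j + J : ℕ) : ℝ) with ht
          have htnn : (0:ℝ) ≤ t := Nat.cast_nonneg _
          have htβ : β / 2 ≤ t := by
            have : (J:ℝ) ≤ t := by rw [ht]; push_cast; linarith [Nat.cast_nonneg (α := ℝ) j]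
            linarith
          have hbt : poch b (j + 1 + J) = poch b (j + J) * (b + t) := by
            rw [show j + 1 + J = (j + J) + 1 by ring, poch_succ, ht]
          have hct : poch c (j + 1 + J) = poch c (j + J) * (c + t) := by
            rw [show j + 1 + J = (j + J) + 1 by ring, poch_succ, ht]
          have hft : ((j + 1 + J).factorial : ℝ) = ((j + J).factorial : ℝ) * (t + 1) := by
            rw [show j + 1 + J = (j + J) + 1 by ring, Nat.factorial_succ, ht]
            push_cast; ring
          have hcj : poch c (j + J) ≠ 0 := ne_of_gt (poch_pos _ hc0)
          have hfj : ((j + J).factorial : ℝ) ≠ 0 := by positivity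
          have hct0 : (0:ℝ) < c + t := by linarith
          have ht10 : (0:ℝ) < t + 1 := by linarith
          have heq : h (j + 1) = h j * (((-β / 2 + t) * (b + t)) / ((c + t) * (t + 1))) := by
            rw [hh]
            simp only
            rw [hQsucc j, hbt, hct, hft, ← ht]
            field_simp
          rw [heq]
          have hfac_le_one : ((-β / 2 + t) * (b + t)) / ((c + t) * (t + 1)) ≤ 1 := by
            rw [div_le_one (by positivity)]
            have h1 : -β / 2 + t ≤ t := by linarith
            have h2 : b + t ≤ c + t := by linarith
            nlinarith [hfactor_nonneg j]
          calc h j * (((-β / 2 + t) * (b + t)) / ((c + t) * (t + 1))) ≤ h j * 1 :=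
                mul_le_mul_of_nonneg_left hfac_le_one (hh0 j)
            _ = h j := mul_one _
        have hsum' : Summable (fun j => (-1 : ℝ) ^ j * h j) := by
          have h1 : Summable (fun j => u (j + J)) := (summable_nat_add_iff J).2 hsum
          have h2 : Summable (fun j => K⁻¹ * u (j + J)) := h1.mul_left _
          apply h2.congr
          intro j
          rw [hrepr j]
          field_simp
        have hKtsum : ∑' j, u (j + J) = K * ∑' j, (-1 : ℝ) ^ j * h j := by
          rw [← tsum_mul_left]
          exact tsum_congr hrepr
        rw [hKtsum, abs_mul]
        have hKabs : |K| = |poch (-β / 2) J| := by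
          rw [hKdef, abs_mul, abs_pow, abs_neg, abs_one, one_pow, mul_one]
        have halt := alt_tsum_bound h hh0 hhmono hsum'
        have hh0val : h 0 = poch b J / (poch c J * (J.factorial : ℝ)) := by
          rw [hh]
          simp only [Nat.zero_add, zero_add]
          rw [div_self hK0, one_mul]
        calc |K| * |∑' j, (-1 : ℝ) ^ j * h j| ≤ |K| * h 0 :=
              mul_le_mul_of_nonneg_left halt (abs_nonneg _)
          _ = |poch (-β / 2) J| * (poch b J / (poch c J * (J.factorial : ℝ))) := by
              rw [hKabs, hh0val]
          _ ≤ poch (β / 2) J / (J.factorial : ℝ) := by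
              have hcJ : (0:ℝ) < poch c J := poch_pos J hc0
              have hfJ : (0:ℝ) < (J.factorial : ℝ) := by positivity
              have h1 : poch b J / (poch c J * (J.factorial : ℝ)) ≤ 1 / (J.factorial : ℝ) := by
                rw [div_le_div_iff₀ (by positivity) hfJ]
                have := poch_le_poch (x := b) (y := c) J (le_of_lt hb) hbc
                nlinarith [poch_pos (x := b) J hb]
              calc |poch (-β / 2) J| * (poch b J / (poch c J * (J.factorial : ℝ)))
                  ≤ poch (β / 2) J * (1 / (J.factorial : ℝ)) :=
                    mul_le_mul (habs' J) h1 (le_of_lt (div_pos (poch_pos J hb) (by positivity))) (poch_nonneg J hβ2)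
                _ = poch (β / 2) J / (J.factorial : ℝ) := by ring
    have hJC : poch (β / 2) J / (J.factorial : ℝ) ≤ C :=
      hCge J (Finset.self_mem_range_succ J)
    calc |∑ j ∈ Finset.range J, u j + ∑' j, u (j + J)| ≤
          |∑ j ∈ Finset.range J, u j| + |∑' j, u (j + J)| := abs_add_le _ _
      _ ≤ C + C := add_le_add hhead (htail.trans hJC)
      _ = 2 * C := by ring
  · rw [htwo, tsum_eq_zero_of_not_summable hsum]
    simp only [abs_zero]
    linarith

set_option maxHeartbeats 1000000 in
/-- Convergence of the moment series in Corollary 1. -/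
theorem moment_series_convergence (n : ℕ) (hn : 1 ≤ n) (α β γ δ : ℝ) (hα : 0 < α)
    (hβ : 0 ≤ β) (hcond : γ + δ - 2 * α + 1 < (n : ℝ)) (k : ℕ) (r : ℝ)
    (hr : r ∈ Ioo (-1 : ℝ) 1) :
    Summable (fun m : ℕ =>
      poch (((n : ℝ) - γ - 1) / 2) m * poch (((n : ℝ) - δ - 1) / 2) m /
          (poch (1 / 2) m * (m.factorial : ℝ)) *
        (betaFn (((k : ℝ) + 2 * m + 1) / 2) (α + ((n : ℝ) - γ - δ - 1) / 2) *
          twoF1 (-β / 2) (((k : ℝ) + 2 * m + 1) / 2)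
            (((k : ℝ) + 2 * m + 2 * α + (n : ℝ) - γ - δ) / 2) (-1)) *
        r ^ (2 * m)) := by
  obtain ⟨hr1, hr2⟩ := hr
  have hr2lt : r ^ 2 < 1 := by nlinarith
  set ρ : ℝ := (1 + r ^ 2) / 2 with hρdef
  have hρ1 : ρ < 1 := by rw [hρdef]; linarith
  have hr2ρ : r ^ 2 < ρ := by rw [hρdef]; linarith
  set A : ℝ := ((n : ℝ) - γ - 1) / 2 with hAdef
  set B : ℝ := ((n : ℝ) - δ - 1) / 2 with hBdef
  set v : ℝ := α + ((n : ℝ) - γ - δ - 1) / 2 with hvdef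
  have hv : 0 < v := by rw [hvdef]; linarith
  set a : ℝ := |A| with hadef
  set bb : ℝ := |B| with hbbdef
  have ha0 : 0 ≤ a := abs_nonneg _
  have hbb0 : 0 ≤ bb := abs_nonneg _
  -- the dominating sequence
  set w : ℕ → ℝ := fun m =>
    |poch A m| * |poch B m| / (poch (1 / 2) m * (m.factorial : ℝ)) * (r ^ 2) ^ m with hwdef
  have hw_nonneg : ∀ m, 0 ≤ w m := by
    intro m
    rw [hwdef]
    have := poch_pos (x := (1:ℝ)/2) m (by norm_num)
    positivity
  have hwsum : Summable w := by
    apply summable_of_ratio_norm_eventually_le hρ1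
    have t1 : Tendsto (fun m : ℕ => (m : ℝ) + 1 / 2) atTop atTop :=
      tendsto_atTop_add_const_right _ _ tendsto_natCast_atTop_atTop
    have t2 : Tendsto (fun m : ℕ => (m : ℝ) + 1) atTop atTop :=
      tendsto_atTop_add_const_right _ _ tendsto_natCast_atTop_atTop
    have t1' : Tendsto (fun m : ℕ => (a - 1 / 2) / ((m : ℝ) + 1 / 2)) atTop (nhds 0) :=
      Tendsto.div_atTop tendsto_const_nhds t1
    have t2' : Tendsto (fun m : ℕ => (bb - 1) / ((m : ℝ) + 1)) atTop (nhds 0) :=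
      Tendsto.div_atTop tendsto_const_nhds t2
    have htend : Tendsto (fun m : ℕ =>
        (1 + (a - 1 / 2) / ((m : ℝ) + 1 / 2)) * (1 + (bb - 1) / ((m : ℝ) + 1)) * r ^ 2)
        atTop (nhds (r ^ 2)) := by
      have := (((tendsto_const_nhds (x := (1:ℝ))).add t1').mul
        ((tendsto_const_nhds (x := (1:ℝ))).add t2')).mul (tendsto_const_nhds (x := r ^ 2))
      simpa using this
    have hev := htend.eventually_lt_const hr2ρ
    filter_upwards [hev] with m hm
    have hm12 : (0:ℝ) < (m : ℝ) + 1 / 2 := by positivity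
    have hm1 : (0:ℝ) < (m : ℝ) + 1 := by positivity
    have e1 : 1 + (a - 1 / 2) / ((m : ℝ) + 1 / 2) = ((m : ℝ) + a) / ((m : ℝ) + 1 / 2) := by
      field_simp; ring
    have e2 : 1 + (bb - 1) / ((m : ℝ) + 1) = ((m : ℝ) + bb) / ((m : ℝ) + 1) := by
      field_simp; ring
    rw [e1, e2] at hm
    have hm' : ((m : ℝ) + a) * ((m : ℝ) + bb) * r ^ 2 ≤
        ρ * (((m : ℝ) + 1 / 2) * ((m : ℝ) + 1)) := by
      have : ((m : ℝ) + a) / ((m : ℝ) + 1 / 2) * (((m : ℝ) + bb) / ((m : ℝ) + 1)) * r ^ 2 =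
          ((m : ℝ) + a) * ((m : ℝ) + bb) * r ^ 2 / (((m : ℝ) + 1 / 2) * ((m : ℝ) + 1)) := by
        field_simp
      rw [this] at hm
      rw [← div_le_iff₀ (by positivity)] at *
      exact le_of_lt hm
    have hpoch : (0:ℝ) < poch (1 / 2) m := poch_pos m (by norm_num)
    have hfac : (0:ℝ) < (m.factorial : ℝ) := by positivity
    have hwrec : w (m + 1) =
        w m * ((|A + m| * |B + m| * r ^ 2) / (((m : ℝ) + 1 / 2) * ((m : ℝ) + 1))) := by
      rw [hwdef]
      simp only
      rw [poch_succ, poch_succ, poch_succ, Nat.factorial_succ, abs_mul, abs_mul]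
      push_cast
      rw [pow_succ]
      field_simp
      ring
    have hA' : |A + m| ≤ (m : ℝ) + a := by
      calc |A + m| ≤ |A| + |(m : ℝ)| := abs_add_le _ _
        _ = (m : ℝ) + a := by rw [Nat.abs_cast, ← hadef]; ring
    have hB' : |B + m| ≤ (m : ℝ) + bb := by
      calc |B + m| ≤ |B| + |(m : ℝ)| := abs_add_le _ _
        _ = (m : ℝ) + bb := by rw [Nat.abs_cast, ← hbbdef]; ring
    have hfrac : (|A + m| * |B + m| * r ^ 2) / (((m : ℝ) + 1 / 2) * ((m : ℝ) + 1)) ≤ ρ := by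
      rw [div_le_iff₀ (by positivity)]
      calc |A + m| * |B + m| * r ^ 2 ≤ ((m : ℝ) + a) * ((m : ℝ) + bb) * r ^ 2 := by
            have h2 : (0:ℝ) ≤ r ^ 2 := sq_nonneg r
            apply mul_le_mul_of_nonneg_right _ h2
            exact mul_le_mul hA' hB' (abs_nonneg _) (by positivity)
        _ ≤ ρ * (((m : ℝ) + 1 / 2) * ((m : ℝ) + 1)) := hm'
    rw [Real.norm_eq_abs, Real.norm_eq_abs, abs_of_nonneg (hw_nonneg _),
      abs_of_nonneg (hw_nonneg _), hwrec]
    calc w m * ((|A + m| * |B + m| * r ^ 2) / (((m : ℝ) + 1 / 2) * ((m : ℝ) + 1))) ≤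
          w m * ρ := mul_le_mul_of_nonneg_left hfrac (hw_nonneg m)
      _ = ρ * w m := mul_comm _ _
  -- constants
  set Cβ : ℝ := 2 * ∑ j ∈ Finset.range (⌈β / 2⌉₊ + 1), poch (β / 2) j / (j.factorial : ℝ)
    with hCβdef
  have hCβnn : 0 ≤ Cβ := by
    rw [hCβdef]
    have : ∀ j ∈ Finset.range (⌈β / 2⌉₊ + 1), (0:ℝ) ≤ poch (β / 2) j / (j.factorial : ℝ) := by
      intro j _
      have := poch_nonneg (x := β / 2) j (by linarith)
      positivity
    have := Finset.sum_nonneg this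
    linarith
  set D : ℝ := Real.Gamma v * Cβ with hDdef
  have hΓv : 0 < Real.Gamma v := Real.Gamma_pos_of_pos hv
  apply Summable.of_norm_bounded_eventually_nat (g := fun m => D * w m) (hwsum.mul_left D)
  filter_upwards [eventually_ge_atTop 2] with m hm2
  set bm : ℝ := ((k : ℝ) + 2 * m + 1) / 2 with hbmdef
  have hbm_pos : 0 < bm := by
    rw [hbmdef]
    have : (0:ℝ) ≤ (k : ℝ) := Nat.cast_nonneg _
    have : (0:ℝ) ≤ (m : ℝ) := Nat.cast_nonneg _
    positivity
  have hbm2 : 2 ≤ bm := by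
    rw [hbmdef]
    have h1 : (0:ℝ) ≤ (k : ℝ) := Nat.cast_nonneg _
    have h2 : (2:ℝ) ≤ (m : ℝ) := by exact_mod_cast hm2
    linarith
  have hcm : ((k : ℝ) + 2 * m + 2 * α + (n : ℝ) - γ - δ) / 2 = bm + v := by
    rw [hbmdef, hvdef]; ring
  rw [hcm]
  have hF := twoF1_neg_one_bound β bm v hβ hbm_pos hv
  rw [← hCβdef] at hF
  have hbeta_le : betaFn bm v ≤ Real.Gamma v := by
    have hmono := Real.Gamma_strictMonoOn_Ici
    have hlt : Real.Gamma bm < Real.Gamma (bm + v) :=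
      hmono (by simpa using hbm2) (by simp only [mem_Ici]; linarith) (by linarith)
    have hΓbm : 0 < Real.Gamma bm := Real.Gamma_pos_of_pos hbm_pos
    have hΓbv : 0 < Real.Gamma (bm + v) := Real.Gamma_pos_of_pos (by linarith)
    rw [betaFn, div_le_iff₀ hΓbv]
    nlinarith
  have hbeta_pos : 0 < betaFn bm v := by
    rw [betaFn]
    have hΓbm : 0 < Real.Gamma bm := Real.Gamma_pos_of_pos hbm_pos
    have hΓbv : 0 < Real.Gamma (bm + v) := Real.Gamma_pos_of_pos (by linarith)
    positivity
  have hBF : |betaFn bm v * twoF1 (-β / 2) bm (bm + v) (-1)| ≤ D := by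
    rw [hDdef, abs_mul, abs_of_pos hbeta_pos]
    exact mul_le_mul hbeta_le hF (abs_nonneg _) (le_of_lt hΓv)
  have hpoch : (0:ℝ) < poch (1 / 2) m := poch_pos m (by norm_num)
  have hfac : (0:ℝ) < (m.factorial : ℝ) := by positivity
  rw [Real.norm_eq_abs, abs_mul, abs_mul]
  have hr2m : |r ^ (2 * m)| = (r ^ 2) ^ m := by
    rw [pow_mul, abs_pow, abs_of_nonneg (sq_nonneg r)]
  have habsP : |poch A m * poch B m / (poch (1 / 2) m * (m.factorial : ℝ))| =
      |poch A m| * |poch B m| / (poch (1 / 2) m * (m.factorial : ℝ)) := by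
    rw [abs_div, abs_mul, abs_of_pos (by positivity : (0:ℝ) < poch (1 / 2) m * (m.factorial : ℝ))]
  rw [hr2m, habsP]
  calc |poch A m| * |poch B m| / (poch (1 / 2) m * (m.factorial : ℝ)) *
        |betaFn bm v * twoF1 (-β / 2) bm (bm + v) (-1)| * (r ^ 2) ^ m
      ≤ |poch A m| * |poch B m| / (poch (1 / 2) m * (m.factorial : ℝ)) * D * (r ^ 2) ^ m := by
        apply mul_le_mul_of_nonneg_right _ (by positivity)
        apply mul_le_mul_of_nonneg_left hBF (by positivity)
    _ = D * w m := by rw [hwdef]; ring
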